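/- Let a = (a_1,…,a_l) be a strictly increasing sequence in [2n] with l ≤ 2n. Then 0 ≤ l − |rem(a)| ≤ min(2n − l, l); in particular |rem(a)| ≥ 2(l − n). -/

import Mathlib

/-!
Let `m` be the last entry of `a` (or `0` for `a = []`). The invariant is
`2 l ≤ |rem a| + m + m % 2`, i.e. the number of kept entries plus the number of removed pairs is
at most `⌈m / 2⌉`. It is proved by induction peeling off the last one or two entries; the only
delicate case is when a pair `(x - 1, x)` is blocked by the length test, where the parity of
`|rem|` gains the missing unit. Since `m ≤ 2n`, this gives `2 l ≤ |rem a| + 2n`.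
-/

/-- The removal subword `rem a` of a column `a = (a_1, …, a_l)` (written 0-indexed as a
list): `rem a = []` if `l ≤ 1`; if `l ≥ 2`, `a_l` is even, `a_{l-1} = a_l − 1` and
`a_l < 2l − |rem (a_1,…,a_{l-2})| − 1`, then `rem a = rem (a_1,…,a_{l-2}) ++ [a_{l-1}, a_l]`;
otherwise `rem a = rem (a_1,…,a_{l-1})`. -/
def rem (a : List ℕ) : List ℕ :=
  if a.length ≤ 1 then []
  else
    if a.getLast! % 2 = 0 ∧ a.dropLast.getLast! + 1 = a.getLast! ∧
        a.getLast! + (rem a.dropLast.dropLast).length + 1 < 2 * a.length then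
      rem a.dropLast.dropLast ++ [a.dropLast.getLast!, a.getLast!]
    else
      rem a.dropLast
termination_by a.length
decreasing_by
  all_goals (simp [List.length_dropLast]; omega)

theorem List.append_pair_induction {α : Type*} {motive : List α → Prop} (nil : motive [])
    (singleton : ∀ x, motive [x])
    (append_pair : ∀ b y x, motive b → motive (b ++ [y]) → motive (b ++ [y, x])) :
    ∀ a, motive a := by
  intro a
  induction h : a.length using Nat.strong_induction_on generalizing a with
  | _ l ih =>
  rcases a.eq_nil_or_concat with rfl | ⟨c, x, rfl⟩
  · exact nil
  rcases c.eq_nil_or_concat with rfl | ⟨b, y, rfl⟩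
  · exact singleton x
  simp only [List.concat_eq_append, List.append_assoc, List.cons_append, List.nil_append] at h ⊢
  subst h
  exact append_pair b y x (ih _ (by simp) b rfl) (ih _ (by simp) _ rfl)

@[simp] theorem rem_nil : rem [] = [] := by rw [rem]; simp
@[simp] theorem rem_singleton (x : ℕ) : rem [x] = [] := by rw [rem]; simp

theorem rem_append_pair (b : List ℕ) (y x : ℕ) :
    rem (b ++ [y, x]) = if x % 2 = 0 ∧ y + 1 = x ∧ x + (rem b).length + 1 < 2 * (b.length + 2)
      then rem b ++ [y, x] else rem (b ++ [y]) := by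
  rw [rem, if_neg (by simp)]
  have h1 : (b ++ [y, x]).dropLast = b ++ [y] := by simp [List.dropLast_append_of_ne_nil]
  simp [h1, List.getLast!_eq_getLast?_getD]

theorem rem_append_singleton_of_odd (b : List ℕ) {y : ℕ} (hy : y % 2 = 1) :
    rem (b ++ [y]) = rem b := by
  rcases b.eq_nil_or_concat with rfl | ⟨c, z, rfl⟩
  · simp
  simp only [List.concat_eq_append, List.append_assoc, List.cons_append, List.nil_append]
  rw [rem_append_pair, if_neg (by omega)]

theorem rem_sublist (a : List ℕ) : (rem a).Sublist a := by
  induction a using List.append_pair_induction with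
  | nil => simp
  | singleton x => simp
  | append_pair b y x hb hby =>
    rw [rem_append_pair]
    split
    · exact hb.append (List.Sublist.refl _)
    · exact hby.trans (by simp)

theorem even_length_rem (a : List ℕ) : Even (rem a).length := by
  induction a using List.append_pair_induction with
  | nil => simp
  | singleton x => simp
  | append_pair b y x hb hby =>
    rw [rem_append_pair]
    split
    · simpa [Nat.even_add_one, parity_simps] using hb
    · exact hby

theorem List.rel_getLastD_of_pairwise_append_singleton {α : Type*} {R : α → α → Prop}
    {b : List α} {d y : α} (hb : (b ++ [y]).Pairwise R) (hd : R d y) : R (b.getLastD d) y := by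
  rcases b.eq_nil_or_concat with rfl | ⟨c, z, rfl⟩
  · simpa
  simp only [List.concat_eq_append, List.getLastD_concat]
  exact (List.pairwise_append.1 hb).2.2 z (by simp) y (by simp)

theorem two_mul_length_le_length_rem_add_getLastD {a : List ℕ} (hsorted : a.Pairwise (· < ·))
    (hpos : ∀ x ∈ a, 0 < x) :
    2 * a.length ≤ (rem a).length + a.getLastD 0 + a.getLastD 0 % 2 := by
  induction a using List.append_pair_induction with
  | nil => simp
  | singleton x => simp at hpos ⊢; omega
  | append_pair b y x hb hby =>
    have hsorted' : (b ++ [y]).Pairwise (· < ·) := hsorted.sublist (by simp)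
    have hyx : y < x := List.pairwise_pair.1 (List.pairwise_append.1 hsorted).2.1
    have hzy : b.getLastD 0 < y :=
      List.rel_getLastD_of_pairwise_append_singleton hsorted' (hpos y (by simp))
    have ihb := hb (hsorted'.sublist (by simp)) fun z hz => hpos z (by simp [hz])
    have ihby := hby hsorted' fun z hz => hpos z (by simp at hz ⊢; tauto)
    simp only [List.getLastD_concat, List.length_append, List.length_cons, List.length_nil] at ihby
    have hlast : (b ++ [y, x]).getLastD 0 = x := by simp [List.getLastD_eq_getLast?]
    rw [hlast, rem_append_pair]
    split_ifs with hremoved <;> simp only [List.length_append, List.length_cons, List.length_nil]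
    · omega
    · by_cases hy : y % 2 = 1
      · -- when moreover `y + 1 = x`, the failed length test, sharpened by parity, is the bound
        rw [rem_append_singleton_of_odd b hy] at ihby ⊢
        have heven : (rem b).length % 2 = 0 := Nat.even_iff.1 (even_length_rem b)
        omega
      · omega

theorem stmt_13_general (n : ℕ) (a : List ℕ) (hsorted : a.Pairwise (· < ·))
    (hbound : ∀ x ∈ a, 1 ≤ x ∧ x ≤ 2 * n) :
    (rem a).length ≤ a.length ∧
    a.length - (rem a).length ≤ min (2 * n - a.length) a.length ∧
    2 * a.length ≤ (rem a).length + 2 * n := by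
  have hrem_le : (rem a).length ≤ a.length := (rem_sublist a).length_le
  have hlast_le : a.getLastD 0 ≤ 2 * n := by
    rcases a.eq_nil_or_concat with rfl | ⟨b, x, rfl⟩
    · simp
    · simpa using (hbound x (by simp)).2
  have := two_mul_length_le_length_rem_add_getLastD hsorted fun x hx => (hbound x hx).1
  omega

/-- For a strictly increasing sequence `a` in `[2n]` of length `l ≤ 2n`:
`0 ≤ l − |rem a| ≤ min (2n − l) l`; in particular `|rem a| ≥ 2(l − n)`
(stated in ℕ as `2l ≤ |rem a| + 2n`). -/
theorem stmt_13 (n : ℕ) (a : List ℕ) (hsorted : a.Pairwise (· < ·))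
    (hbound : ∀ x ∈ a, 1 ≤ x ∧ x ≤ 2 * n) (hlen : a.length ≤ 2 * n) :
    (rem a).length ≤ a.length ∧
    a.length - (rem a).length ≤ min (2 * n - a.length) a.length ∧
    2 * a.length ≤ (rem a).length + 2 * n :=
  stmt_13_general n a hsorted hbound
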